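/- arXiv:2006.13554 — 3 statements merged into one kernel-verified Lean document; each statement's English description precedes it below -/
import Mathlib

section
/- Under symmetric label noise with rate η, the noisy risk of any loss satisfying ∑_j L(f(x), j) = C for all x satisfies R^η(f) = (1 - ηK/(K-1))·R(f) + Cη/(K-1), where R(f) is the clean risk. -/
open Finset

theorem symmetric_noise_risk_decomposition {n K : ℕ} (hK : 2 ≤ K) (hn : 0 < n)
    (L : Fin n → Fin K → ℝ) (y : Fin n → Fin K) (C : ℝ)
    (hC : ∀ i, ∑ k, L i k = C) (η : ℝ) (hη0 : 0 ≤ η) (hη1 : η < 1) :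
    (1 / (n : ℝ)) * ∑ i, ((1 - η) * L i (y i) +
        (η / ((K : ℝ) - 1)) * ∑ k ∈ Finset.univ.erase (y i), L i k) =
      (1 - η * (K : ℝ) / ((K : ℝ) - 1)) * ((1 / (n : ℝ)) * ∑ i, L i (y i)) +
        C * η / ((K : ℝ) - 1) := by
  have hK1 : ((K : ℝ) - 1) ≠ 0 := by
    have : (2 : ℝ) ≤ (K : ℝ) := by exact_mod_cast hK
    linarith
  have hn' : (n : ℝ) ≠ 0 := by positivity
  have herase : ∀ i, ∑ k ∈ Finset.univ.erase (y i), L i k = C - L i (y i) := by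
    intro i
    have := Finset.add_sum_erase Finset.univ (L i) (Finset.mem_univ (y i))
    rw [hC i] at this
    linarith
  simp only [herase]
  rw [Finset.sum_congr rfl (fun i _ => by ring :
    ∀ i ∈ Finset.univ, (1 - η) * L i (y i) + η / ((K : ℝ) - 1) * (C - L i (y i)) =
      (1 - η - η / ((K : ℝ) - 1)) * L i (y i) + η / ((K : ℝ) - 1) * C)]
  rw [Finset.sum_add_distrib, ← Finset.mul_sum, Finset.sum_const, Finset.card_univ,
    Fintype.card_fin, nsmul_eq_mul]
  field_simp
  ring
end

section
/- Under asymmetric (class-conditional) label noise, the noisy risk of a normalized loss (with pointwise label-sum equal to 1) decomposes as R^η(f) = E[1 - η_y] - E[∑_{k ≠ y} (1 - η_y - η_{yk})·L_norm(f(x), k)]. -/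
open Finset

theorem asymmetric_noise_risk_decomposition {n K : ℕ} (hK : 2 ≤ K) (hn : 0 < n)
    (L : Fin n → Fin K → ℝ) (y : Fin n → Fin K)
    (hL : ∀ i, ∑ k, L i k = 1)
    (ηy : Fin K → ℝ) (ηyk : Fin K → Fin K → ℝ)
    (hnoise : ∀ c : Fin K, (1 - ηy c) + ∑ k ∈ Finset.univ.erase c, ηyk c k = 1) :
    (1 / (n : ℝ)) * ∑ i, ((1 - ηy (y i)) * L i (y i) +
        ∑ k ∈ Finset.univ.erase (y i), ηyk (y i) k * L i k) =
      (1 / (n : ℝ)) * ∑ i, (1 - ηy (y i)) -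
        (1 / (n : ℝ)) * ∑ i, ∑ k ∈ Finset.univ.erase (y i),
          (1 - ηy (y i) - ηyk (y i) k) * L i k := by
  rw [← mul_sub, ← Finset.sum_sub_distrib]
  congr 1
  refine Finset.sum_congr rfl fun i _ => ?_
  have h1 : L i (y i) + ∑ k ∈ Finset.univ.erase (y i), L i k = 1 := by
    rw [Finset.add_sum_erase _ _ (Finset.mem_univ (y i))]; exact hL i
  have h2 : L i (y i) = 1 - ∑ k ∈ Finset.univ.erase (y i), L i k := by linarith
  rw [h2]
  simp only [sub_mul, one_mul, Finset.sum_sub_distrib, Finset.mul_sum]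
  have h3 : (∑ k ∈ Finset.univ.erase (y i), L i k) * ηy (y i)
      = ∑ x ∈ Finset.univ.erase (y i), ηy (y i) * L i x := by
    rw [Finset.sum_mul]; exact Finset.sum_congr rfl fun k _ => mul_comm _ _
  linarith [h3]
end

section
/- Suppose a normalized loss satisfies 0 ≤ L_norm(f(x),k) ≤ 1/(K-1) for all k and ∑_k L_norm(f(x),k) = 1, and suppose the clean-risk minimizer f* achieves R(f*) = 0 (so L_norm(f*(x), y) = 0 for all samples, forcing L_norm(f*(x), k) = 1/(K-1) for all k ≠ y). Then under asymmetric noise with 1 - η_y - η_{yk} > 0 for all y and k ≠ y, any noisy-risk minimizer f_η* satisfies L_norm(f_η*(x), k) = 1/(K-1) for all k ≠ y at every sample, hence f_η* has the same loss values as f*. -/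
/-!
Since the row of `M` sums to `1`, its noisy loss minus that of the row of `M*` equals
`∑_{k ≠ y} (1 - η_y - η_{yk}) (1/(K-1) - M(i,k))`, a sum of nonnegative terms with positive
weights. So every sample's noisy loss under `M` is at least the one under `M*`; a total risk
that is no larger forces equality in every sample, hence every off-label entry equals `1/(K-1)`.
-/

open Finset

namespace NoisyLoss

variable {ι : Type*} [Fintype ι] [DecidableEq ι]

/-- Expected loss of the loss vector `m` at a sample of true label `c`, when `c` is kept with
probability `1 - ηy c` and flipped to `k` with probability `ηyk c k`. -/
def noisyLoss (ηy : ι → ℝ) (ηyk : ι → ι → ℝ) (c : ι) (m : ι → ℝ) : ℝ :=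
  (1 - ηy c) * m c + ∑ k ∈ univ.erase c, ηyk c k * m k

variable {ηy : ι → ℝ} {ηyk : ι → ι → ℝ} {c : ι} {m m' : ι → ℝ}

lemma apply_label_sub_apply_label (hsum : ∑ k, m k = ∑ k, m' k) :
    m c - m' c = ∑ k ∈ univ.erase c, (m' k - m k) := by
  rw [sum_sub_distrib]
  have := add_sum_erase univ m (mem_univ c)
  have := add_sum_erase univ m' (mem_univ c)
  linarith

lemma noisyLoss_sub_noisyLoss (hsum : ∑ k, m k = ∑ k, m' k) :
    noisyLoss ηy ηyk c m - noisyLoss ηy ηyk c m' =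
      ∑ k ∈ univ.erase c, (1 - ηy c - ηyk c k) * (m' k - m k) := by
  have hlabel : (1 - ηy c) * m c - (1 - ηy c) * m' c =
      ∑ k ∈ univ.erase c, (1 - ηy c) * (m' k - m k) := by
    rw [← mul_sub, apply_label_sub_apply_label hsum, mul_sum]
  unfold noisyLoss
  have hsplit : ∀ k, (1 - ηy c - ηyk c k) * (m' k - m k) =
      (1 - ηy c) * (m' k - m k) + ηyk c k * m k - ηyk c k * m' k := fun k => by ring
  simp only [hsplit, sum_sub_distrib, sum_add_distrib, ← hlabel]
  ring

section Dominated

variable (hdom : ∀ k, k ≠ c → 0 < 1 - ηy c - ηyk c k) (hle : ∀ k, k ≠ c → m k ≤ m' k)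
include hdom hle

lemma noisyLoss_sub_noisyLoss_summand_nonneg :
    ∀ k ∈ univ.erase c, 0 ≤ (1 - ηy c - ηyk c k) * (m' k - m k) := fun k hk =>
  have hk := ne_of_mem_erase hk
  mul_nonneg (hdom k hk).le (sub_nonneg.2 (hle k hk))

variable (hsum : ∑ k, m k = ∑ k, m' k)
include hsum

lemma noisyLoss_le_noisyLoss : noisyLoss ηy ηyk c m' ≤ noisyLoss ηy ηyk c m :=
  sub_nonneg.1 <| (noisyLoss_sub_noisyLoss hsum).symm ▸
    sum_nonneg (noisyLoss_sub_noisyLoss_summand_nonneg hdom hle)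

lemma eq_of_noisyLoss_eq (heq : noisyLoss ηy ηyk c m = noisyLoss ηy ηyk c m') : m = m' := by
  have hzero := (sum_eq_zero_iff_of_nonneg (noisyLoss_sub_noisyLoss_summand_nonneg hdom hle)).1
    (by rw [← noisyLoss_sub_noisyLoss hsum, heq, sub_self])
  have hoff : ∀ k, k ≠ c → m k = m' k := fun k hk => by
    have := hzero k (mem_erase.2 ⟨hk, mem_univ k⟩)
    rcases mul_eq_zero.1 this with hweight | hgap
    · exact absurd hweight (hdom k hk).ne'
    · linarith
  funext k
  by_cases hk : k = c
  · subst hk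
    have := apply_label_sub_apply_label (c := k) hsum
    rw [sum_congr rfl fun j hj => sub_eq_zero.2 (hoff j (ne_of_mem_erase hj)).symm,
      sum_const_zero] at this
    linarith
  · exact hoff k hk

end Dominated

lemma eq_of_sum_noisyLoss_le {σ : Type*} [Fintype σ] {y : σ → ι} {M M' : σ → ι → ℝ}
    (hdom : ∀ c k, k ≠ c → 0 < 1 - ηy c - ηyk c k)
    (hle : ∀ i k, k ≠ y i → M i k ≤ M' i k) (hsum : ∀ i, ∑ k, M i k = ∑ k, M' i k)
    (hrisk : ∑ i, noisyLoss ηy ηyk (y i) (M i) ≤ ∑ i, noisyLoss ηy ηyk (y i) (M' i)) :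
    M = M' := by
  have hpoint : ∀ i ∈ univ, noisyLoss ηy ηyk (y i) (M' i) ≤ noisyLoss ηy ηyk (y i) (M i) :=
    fun i _ => noisyLoss_le_noisyLoss (hdom (y i)) (hle i) (hsum i)
  have heq := (sum_eq_sum_iff_of_le hpoint).1 (le_antisymm (sum_le_sum hpoint) hrisk)
  funext i
  exact eq_of_noisyLoss_eq (hdom (y i)) (hle i) (hsum i) (heq i (mem_univ i)).symm

end NoisyLoss

lemma sum_eq_one_of_eq_zero_of_ne_eq_inv {K : ℕ} (hK : 2 ≤ K) {c : Fin K} {m : Fin K → ℝ}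
    (hc : m c = 0) (hne : ∀ k, k ≠ c → m k = 1 / ((K : ℝ) - 1)) : ∑ k, m k = 1 := by
  have hK' : (K : ℝ) - 1 ≠ 0 := by
    have : (2 : ℝ) ≤ K := by exact_mod_cast hK
    linarith
  rw [← add_sum_erase univ m (mem_univ c), hc, zero_add,
    sum_congr rfl fun k hk => hne k (ne_of_mem_erase hk), sum_const,
    card_erase_of_mem (mem_univ c), card_univ, Fintype.card_fin, nsmul_eq_mul,
    Nat.cast_sub (by omega : 1 ≤ K), Nat.cast_one, mul_one_div_cancel hK']

open NoisyLoss in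
theorem asymmetric_noise_tolerance_general {n K : ℕ} (hK : 2 ≤ K) (hn : 0 < n)
    (y : Fin n → Fin K)
    (ηy : Fin K → ℝ) (ηyk : Fin K → Fin K → ℝ)
    (hdom : ∀ c k : Fin K, k ≠ c → 0 < 1 - ηy c - ηyk c k)
    (M Mstar : Fin n → Fin K → ℝ)
    (hM1 : ∀ i k, M i k ≤ 1 / ((K : ℝ) - 1))
    (hMsum : ∀ i, ∑ k, M i k = 1)
    (hMstar0 : ∀ i, Mstar i (y i) = 0)
    (hMstar1 : ∀ i k, k ≠ y i → Mstar i k = 1 / ((K : ℝ) - 1))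
    (hrisk : (1 / (n : ℝ)) * ∑ i, ((1 - ηy (y i)) * M i (y i) +
          ∑ k ∈ Finset.univ.erase (y i), ηyk (y i) k * M i k) ≤
        (1 / (n : ℝ)) * ∑ i, ((1 - ηy (y i)) * Mstar i (y i) +
          ∑ k ∈ Finset.univ.erase (y i), ηyk (y i) k * Mstar i k)) :
    (∀ i, ∀ k, k ≠ y i → M i k = 1 / ((K : ℝ) - 1)) ∧ (∀ i k, M i k = Mstar i k) := by
  have hsum : ∀ i, ∑ k, M i k = ∑ k, Mstar i k := fun i => by
    rw [hMsum, sum_eq_one_of_eq_zero_of_ne_eq_inv hK (hMstar0 i) (hMstar1 i)]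
  have hle : ∀ i k, k ≠ y i → M i k ≤ Mstar i k := fun i k hk => hMstar1 i k hk ▸ hM1 i k
  have hsum_risk : ∑ i, noisyLoss ηy ηyk (y i) (M i) ≤ ∑ i, noisyLoss ηy ηyk (y i) (Mstar i) :=
    le_of_mul_le_mul_left hrisk (by positivity)
  have hM : M = Mstar := eq_of_sum_noisyLoss_le hdom hle hsum hsum_risk
  subst hM
  exact ⟨hMstar1, fun _ _ => rfl⟩

theorem asymmetric_noise_tolerance {n K : ℕ} (hK : 2 ≤ K) (hn : 0 < n)
    (y : Fin n → Fin K)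
    (ηy : Fin K → ℝ) (ηyk : Fin K → Fin K → ℝ)
    (hnoise : ∀ c : Fin K, (1 - ηy c) + ∑ k ∈ Finset.univ.erase c, ηyk c k = 1)
    (hdom : ∀ c k : Fin K, k ≠ c → 0 < 1 - ηy c - ηyk c k)
    (M Mstar : Fin n → Fin K → ℝ)
    (hM0 : ∀ i k, 0 ≤ M i k) (hM1 : ∀ i k, M i k ≤ 1 / ((K : ℝ) - 1))
    (hMsum : ∀ i, ∑ k, M i k = 1)
    (hMstar0 : ∀ i, Mstar i (y i) = 0)
    (hMstar1 : ∀ i k, k ≠ y i → Mstar i k = 1 / ((K : ℝ) - 1))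
    (hrisk : (1 / (n : ℝ)) * ∑ i, ((1 - ηy (y i)) * M i (y i) +
          ∑ k ∈ Finset.univ.erase (y i), ηyk (y i) k * M i k) ≤
        (1 / (n : ℝ)) * ∑ i, ((1 - ηy (y i)) * Mstar i (y i) +
          ∑ k ∈ Finset.univ.erase (y i), ηyk (y i) k * Mstar i k)) :
    (∀ i, ∀ k, k ≠ y i → M i k = 1 / ((K : ℝ) - 1)) ∧ (∀ i k, M i k = Mstar i k) :=
  asymmetric_noise_tolerance_general hK hn y ηy ηyk hdom M Mstar hM1 hMsum hMstar0 hMstar1 hrisk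
end
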